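/- Fix n a power of 2 and let g' be the function on [0,1]² with Haar coefficients g'_{I×J} = |I×J|^{1/2} for dyadic squares with 0 ≤ i(I), i(J) < n (where i(I) = −log₂|I|, I ⊆ [0,1]) and 0 otherwise. Then the dyadic product BMO norm of g' is exactly n: ‖g'‖_{BMO_d(ℝ⊗ℝ)} = n. In particular, taking Ω = (0,1)², (|Ω|^{-1} Σ_{R⊆Ω} (g'_R)²)^{1/2} = n. -/

import Mathlib

open MeasureTheory Set
open scoped ENNReal Classical

noncomputable section

/-- The dyadic interval `[n·2^k, (n+1)·2^k)`, indexed by `p = (k, n)`. -/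
def dyadicI (p : ℤ × ℤ) : Set ℝ := Set.Ico ((p.2 : ℝ) * 2 ^ p.1) ((p.2 + 1 : ℝ) * 2 ^ p.1)

/-- The length `|I| = 2^k` of the dyadic interval indexed by `p = (k, n)`. -/
def dlen (p : ℤ × ℤ) : ℝ := (2 : ℝ) ^ p.1

/-- The `L²`-normalized Haar function of the dyadic interval indexed by `p = (k, n)`. -/
def haar (p : ℤ × ℤ) (x : ℝ) : ℝ :=
  (2 : ℝ) ^ (-(p.1 : ℝ) / 2) *
    ((dyadicI (p.1 - 1, 2 * p.2)).indicator 1 x - (dyadicI (p.1 - 1, 2 * p.2 + 1)).indicator 1 x)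

/-- The normalized indicator `χ_I/|I|`. -/
def nind (p : ℤ × ℤ) (x : ℝ) : ℝ := (dlen p)⁻¹ * (dyadicI p).indicator 1 x

/-- Index of a dyadic rectangle `R = I × J`. -/
abbrev RectIx : Type := (ℤ × ℤ) × (ℤ × ℤ)

/-- The dyadic rectangle `I × J`. -/
def dyadicR (r : RectIx) : Set (ℝ × ℝ) := (dyadicI r.1) ×ˢ (dyadicI r.2)

/-- The area `|R| = |I|·|J|`. -/
def rlen (r : RectIx) : ℝ := dlen r.1 * dlen r.2

/-- The rectangular Haar function `h_R = h_I ⊗ h_J`. -/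
def haarR (r : RectIx) (z : ℝ × ℝ) : ℝ := haar r.1 z.1 * haar r.2 z.2

/-- The rectangular Haar coefficient `f_R = ⟨f, h_R⟩`. -/
def haarCoefR (f : ℝ × ℝ → ℝ) (r : RectIx) : ℝ := ∫ z : ℝ × ℝ, f z * haarR r z

/-- The average of `g` over the dyadic rectangle `R`. -/
def avgR (g : ℝ × ℝ → ℝ) (r : RectIx) : ℝ := (rlen r)⁻¹ * ∫ z in dyadicR r, g z

/-- The average of `u` over the dyadic interval `I`. -/
def avgI (u : ℝ → ℝ) (p : ℤ × ℤ) : ℝ := (dlen p)⁻¹ * ∫ x in dyadicI p, u x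

/-- The Haar coefficient in the second variable, `f_J(x) = ⟨f(x,·), h_J⟩`. -/
def coefSnd (f : ℝ × ℝ → ℝ) (q : ℤ × ℤ) (x : ℝ) : ℝ := ∫ y : ℝ, f (x, y) * haar q y

/-- The Haar coefficient in the first variable, `f_I(y) = ⟨f(·,y), h_I⟩`. -/
def coefFst (f : ℝ × ℝ → ℝ) (p : ℤ × ℤ) (y : ℝ) : ℝ := ∫ x : ℝ, f (x, y) * haar p x

/-- The bi-parameter dyadic square function. -/
def sqR (f : ℝ × ℝ → ℝ) (z : ℝ × ℝ) : ℝ :=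
  Real.sqrt (∑' r : RectIx, (haarCoefR f r) ^ 2 * (rlen r)⁻¹ * (dyadicR r).indicator 1 z)

/-- The strong dyadic maximal function. -/
def strongMax (g : ℝ × ℝ → ℝ) (z : ℝ × ℝ) : ℝ :=
  ⨆ r : {r : RectIx // z ∈ dyadicR r}, |avgR g r.1|

/-- The one-parameter dyadic maximal function. -/
def dyadMax (u : ℝ → ℝ) (x : ℝ) : ℝ := ⨆ p : {p : ℤ × ℤ // x ∈ dyadicI p}, |avgI u p.1|

/-- `f` is a finite linear combination of indicators of dyadic intervals. -/
def IsDyadicSimple (f : ℝ → ℝ) : Prop :=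
  ∃ (s : Finset (ℤ × ℤ)) (c : ℤ × ℤ → ℝ),
    f = fun x => ∑ p ∈ s, c p * (dyadicI p).indicator 1 x

/-- `g` is a finite linear combination of indicators of dyadic rectangles. -/
def IsDyadicSimple2 (g : ℝ × ℝ → ℝ) : Prop :=
  ∃ (s : Finset RectIx) (c : RectIx → ℝ),
    g = fun z => ∑ r ∈ s, c r * (dyadicR r).indicator 1 z

/-- `f` is a finite linear combination of rectangular Haar functions. -/
def FinHaar2 (f : ℝ × ℝ → ℝ) : Prop :=
  ∃ (s : Finset RectIx) (c : RectIx → ℝ), f = fun z => ∑ r ∈ s, c r * haarR r z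

/-- The paraproduct `π²_g(f) = Σ_R f_R ⟨g⟩_R h_R`. -/
def pi2 (g f : ℝ × ℝ → ℝ) (z : ℝ × ℝ) : ℝ :=
  ∑' r : RectIx, haarCoefR f r * avgR g r * haarR r z

/-- The mixed paraproduct `π³_g(f) = Σ_{I,J} ⟨f_J⟩_I ⟨g_I⟩_J h_I ⊗ h_J`. -/
def pi3 (g f : ℝ × ℝ → ℝ) (z : ℝ × ℝ) : ℝ :=
  ∑' r : RectIx, avgI (coefSnd f r.2) r.1 * avgI (coefFst g r.1) r.2 * haarR r z

/-- The mixed paraproduct `π⁴_g(f) = Σ_{I,J} ⟨f_J⟩_I g_{I×J} h_I ⊗ χ̄_J`. -/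
def pi4 (g f : ℝ × ℝ → ℝ) (z : ℝ × ℝ) : ℝ :=
  ∑' r : RectIx, avgI (coefSnd f r.2) r.1 * haarCoefR g r * haar r.1 z.1 * nind r.2 z.2

/-- The mixed square-maximal operator `S₂M₁`. -/
def S2M1 (f : ℝ × ℝ → ℝ) (z : ℝ × ℝ) : ℝ :=
  Real.sqrt (∑' q : ℤ × ℤ,
    (dyadMax (coefSnd f q) z.1) ^ 2 * (dlen q)⁻¹ * (dyadicI q).indicator 1 z.2)

/-- The mixed maximal-square operator `M₂S₁`. -/
def M2S1 (g : ℝ × ℝ → ℝ) (z : ℝ × ℝ) : ℝ :=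
  ⨆ q : {q : ℤ × ℤ // z.2 ∈ dyadicI q},
    Real.sqrt (∑' p : ℤ × ℤ,
      (avgI (coefFst g p) q.1) ^ 2 * (dlen p)⁻¹ * (dyadicI p).indicator 1 z.1)

/-- The mixed maximal-square operator `M₁S₂`. -/
def M1S2 (f : ℝ × ℝ → ℝ) (z : ℝ × ℝ) : ℝ :=
  ⨆ p : {p : ℤ × ℤ // z.1 ∈ dyadicI p},
    Real.sqrt (∑' q : ℤ × ℤ,
      (avgI (coefSnd f q) p.1) ^ 2 * (dlen q)⁻¹ * (dyadicI q).indicator 1 z.2)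

/-- The `H^p_d(ℝ⊗ℝ)` quasi-norm `‖M(f)‖_{L^p}`. -/
def hpNorm (p : ℝ) (f : ℝ × ℝ → ℝ) : ℝ≥0∞ :=
  eLpNorm (strongMax f) (ENNReal.ofReal p) volume


/-- The Haar coefficients of the example function: `g'_{I×J} = |I×J|^{1/2}` for dyadic
squares `I×J ⊆ [0,1)²` with generations `0 ≤ i(I), i(J) < n`, and `0` otherwise. -/
def exCoef (n : ℕ) (r : RectIx) : ℝ :=
  if -(n : ℤ) < r.1.1 ∧ r.1.1 ≤ 0 ∧ 0 ≤ r.1.2 ∧ r.1.2 < 2 ^ (-r.1.1).toNat ∧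
     -(n : ℤ) < r.2.1 ∧ r.2.1 ≤ 0 ∧ 0 ≤ r.2.2 ∧ r.2.2 < 2 ^ (-r.2.1).toNat
  then Real.sqrt (rlen r) else 0

/-- The example function `g'` of Statement 15. -/
def exFun (n : ℕ) (z : ℝ × ℝ) : ℝ := ∑' r : RectIx, exCoef n r * haarR r z

/-- The dyadic product BMO norm `sup_Ω (|Ω|⁻¹ Σ_{R⊆Ω} g_R²)^{1/2}`, the supremum being over
open sets of finite positive measure. -/
def bmoProd (g : ℝ × ℝ → ℝ) : ℝ :=
  ⨆ Ω : {Ω : Set (ℝ × ℝ) // IsOpen Ω ∧ 0 < volume Ω ∧ volume Ω < ⊤},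
    Real.sqrt ((volume Ω.1).toReal⁻¹ *
      ∑' r : {r : RectIx // dyadicR r ⊆ Ω.1}, (haarCoefR g r.1) ^ 2)


/-! By orthonormality of the Haar system the coefficients of `exFun n` are `exCoef n`, so
`Σ_{R ⊆ Ω} g'_R² = Σ |R|` over the rectangles `R ⊆ Ω` of the first `n` generations in each
variable. These rectangles come in `n²` shapes, and rectangles of one shape are disjoint, whence
the sum is at most `n² |Ω|`. Conversely each shape tiles `[0,1)²`, so every set containing the
unit square carries the sum `n²`; the open squares `(-δ,1)²` then give `‖g'‖_BMO ≥ n / (1 + δ)`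
for every `δ > 0`. -/

open scoped Topology

lemma mem_dyadicI_iff {p : ℤ × ℤ} {x : ℝ} : x ∈ dyadicI p ↔ ⌊x / 2 ^ p.1⌋ = p.2 := by
  have h : (0 : ℝ) < 2 ^ p.1 := by positivity
  rw [Int.floor_eq_iff, dyadicI, mem_Ico, le_div_iff₀ h, div_lt_iff₀ h]

lemma floor_div_two_zpow_of_le (x : ℝ) {l s : ℤ} (h : l ≤ s) :
    ⌊x / 2 ^ s⌋ = ⌊x / 2 ^ l⌋ / 2 ^ (s - l).toNat := by
  have hs : (2 : ℝ) ^ s = 2 ^ l * ((2 ^ (s - l).toNat : ℕ) : ℝ) := by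
    rw [Nat.cast_pow, Nat.cast_ofNat, ← zpow_natCast, Int.toNat_of_nonneg (by omega),
      ← zpow_add₀ two_ne_zero, add_sub_cancel]
  rw [hs, ← div_div, Int.floor_div_natCast, Nat.cast_pow, Nat.cast_ofNat]

lemma mem_dyadicI_iff_of_mem {l s j : ℤ} {x : ℝ} (hx : x ∈ dyadicI (l, j)) (h : l ≤ s) (i : ℤ) :
    x ∈ dyadicI (s, i) ↔ j / 2 ^ (s - l).toNat = i := by
  rw [mem_dyadicI_iff] at hx ⊢
  rw [floor_div_two_zpow_of_le x h, hx]

lemma disjoint_dyadicI {p q : ℤ × ℤ} (h : p.1 = q.1) (hne : p ≠ q) :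
    Disjoint (dyadicI p) (dyadicI q) := by
  refine Set.disjoint_left.2 fun x hp hq => hne (Prod.ext h ?_)
  rw [mem_dyadicI_iff] at hp hq
  rw [← hp, ← hq, h]

lemma dyadicI_children_subset (p : ℤ × ℤ) :
    dyadicI (p.1 - 1, 2 * p.2) ⊆ dyadicI p ∧ dyadicI (p.1 - 1, 2 * p.2 + 1) ⊆ dyadicI p := by
  have h : (p.1 - (p.1 - 1)).toNat = 1 := by omega
  constructor <;> intro x hx <;>
    exact (mem_dyadicI_iff_of_mem hx (by omega) p.2).2 (by rw [h]; omega)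

lemma haar_eq_zero_of_notMem {p : ℤ × ℤ} {x : ℝ} (hx : x ∉ dyadicI p) : haar p x = 0 := by
  have hc := dyadicI_children_subset p
  rw [haar, indicator_of_notMem (fun h => hx (hc.1 h)),
    indicator_of_notMem (fun h => hx (hc.2 h)), sub_self, mul_zero]

lemma haar_eq_of_mem_dyadicI {p q : ℤ × ℤ} (h : q.1 < p.1) {x y : ℝ} (hx : x ∈ dyadicI q)
    (hy : y ∈ dyadicI q) : haar p x = haar p y := by
  obtain ⟨l, j⟩ := q
  simp only [haar, indicator_apply, mem_dyadicI_iff_of_mem hx (by omega : l ≤ p.1 - 1),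
    mem_dyadicI_iff_of_mem hy (by omega : l ≤ p.1 - 1), Pi.one_apply]

lemma measurableSet_dyadicI (p : ℤ × ℤ) : MeasurableSet (dyadicI p) := measurableSet_Ico

lemma volume_dyadicI (p : ℤ × ℤ) : volume (dyadicI p) = ENNReal.ofReal (dlen p) := by
  rw [dyadicI, Real.volume_Ico, dlen]
  ring_nf

lemma integrable_indicator_dyadicI (p : ℤ × ℤ) : Integrable ((dyadicI p).indicator (1 : ℝ → ℝ)) :=
  (integrable_indicator_iff (measurableSet_dyadicI p)).2 <|
    integrableOn_const (by rw [volume_dyadicI]; exact ENNReal.ofReal_ne_top)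

lemma integral_indicator_dyadicI (p : ℤ × ℤ) :
    ∫ x, (dyadicI p).indicator (1 : ℝ → ℝ) x = dlen p := by
  rw [integral_indicator_one (measurableSet_dyadicI p), measureReal_def, volume_dyadicI,
    ENNReal.toReal_ofReal (by unfold dlen; positivity)]

lemma integrable_haar (p : ℤ × ℤ) : Integrable (haar p) :=
  ((integrable_indicator_dyadicI _).sub (integrable_indicator_dyadicI _)).const_mul _

lemma norm_haar_le (p : ℤ × ℤ) (x : ℝ) : ‖haar p x‖ ≤ (2 : ℝ) ^ (-(p.1 : ℝ) / 2) := by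
  rw [haar, norm_mul, Real.norm_of_nonneg (by positivity)]
  refine mul_le_of_le_one_right (by positivity) (abs_sub_le_of_nonneg_of_le ?_ ?_ ?_ ?_) <;>
    simp only [indicator_apply, Pi.one_apply] <;> split_ifs <;> norm_num

lemma integrable_haar_mul_haar (p q : ℤ × ℤ) : Integrable (fun x => haar p x * haar q x) :=
  (integrable_haar q).bdd_mul (integrable_haar p).aestronglyMeasurable
    (Filter.Eventually.of_forall (norm_haar_le p))

lemma integral_haar (p : ℤ × ℤ) : ∫ x, haar p x = 0 := by
  unfold haar
  rw [integral_const_mul,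
    integral_sub (integrable_indicator_dyadicI _) (integrable_indicator_dyadicI _),
    integral_indicator_dyadicI, integral_indicator_dyadicI, dlen, dlen, sub_self, mul_zero]

lemma haar_mul_self (p : ℤ × ℤ) (x : ℝ) :
    haar p x * haar p x = (dlen p)⁻¹ * ((dyadicI (p.1 - 1, 2 * p.2)).indicator 1 x +
      (dyadicI (p.1 - 1, 2 * p.2 + 1)).indicator 1 x) := by
  have hdisj := disjoint_dyadicI (p := (p.1 - 1, 2 * p.2)) (q := (p.1 - 1, 2 * p.2 + 1)) rfl
    (by simp)
  have hsq : (2 : ℝ) ^ (-(p.1 : ℝ) / 2) * 2 ^ (-(p.1 : ℝ) / 2) = (dlen p)⁻¹ := by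
    rw [← Real.rpow_add two_pos, dlen, ← zpow_neg, ← Real.rpow_intCast]
    push_cast
    ring_nf
  rw [haar, mul_mul_mul_comm, hsq]
  congr 1
  by_cases hA : x ∈ dyadicI (p.1 - 1, 2 * p.2)
  · simp [indicator_of_mem hA, indicator_of_notMem (hdisj.notMem_of_mem_left hA)]
  · by_cases hB : x ∈ dyadicI (p.1 - 1, 2 * p.2 + 1) <;> simp [hA, hB]

lemma integral_haar_mul_self (p : ℤ × ℤ) : ∫ x, haar p x * haar p x = 1 := by
  simp_rw [haar_mul_self]
  rw [integral_const_mul,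
    integral_add (integrable_indicator_dyadicI _) (integrable_indicator_dyadicI _),
    integral_indicator_dyadicI, integral_indicator_dyadicI, dlen, dlen, dlen, ← two_mul,
    ← zpow_one_add₀ two_ne_zero, add_sub_cancel, inv_mul_cancel₀ (by positivity)]

lemma integral_haar_mul_haar_of_lt {p q : ℤ × ℤ} (h : q.1 < p.1) :
    ∫ x, haar q x * haar p x = 0 := by
  obtain ⟨x₀, hx₀⟩ : (dyadicI q).Nonempty := nonempty_Ico.2 (by
    have : (0 : ℝ) < 2 ^ q.1 := by positivity
    nlinarith)
  have hconst : ∀ x, haar q x * haar p x = haar p x₀ * haar q x := fun x => by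
    by_cases hx : x ∈ dyadicI q
    · rw [haar_eq_of_mem_dyadicI h hx hx₀, mul_comm]
    · rw [haar_eq_zero_of_notMem hx, zero_mul, mul_zero]
  simp_rw [hconst, integral_const_mul, integral_haar, mul_zero]

lemma integral_haar_mul_haar (p q : ℤ × ℤ) :
    ∫ x, haar p x * haar q x = if p = q then 1 else 0 := by
  split_ifs with hpq
  · rw [hpq, integral_haar_mul_self]
  rcases lt_trichotomy p.1 q.1 with h | h | h
  · exact integral_haar_mul_haar_of_lt h
  · have hzero : ∀ x, haar p x * haar q x = 0 := fun x => by
      by_cases hx : x ∈ dyadicI p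
      · rw [haar_eq_zero_of_notMem ((disjoint_dyadicI h hpq).notMem_of_mem_left hx), mul_zero]
      · rw [haar_eq_zero_of_notMem hx, zero_mul]
    simp_rw [hzero, integral_zero]
  · simp_rw [mul_comm (haar p _)]
    exact integral_haar_mul_haar_of_lt h

lemma haarR_mul_haarR (r r' : RectIx) (z : ℝ × ℝ) :
    haarR r z * haarR r' z = (haar r.1 z.1 * haar r'.1 z.1) * (haar r.2 z.2 * haar r'.2 z.2) := by
  simp only [haarR]
  ring

lemma integral_haarR_mul_haarR (r r' : RectIx) :
    ∫ z, haarR r z * haarR r' z = if r = r' then 1 else 0 := by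
  simp_rw [haarR_mul_haarR, Measure.volume_eq_prod]
  rw [integral_prod_mul (fun x => haar r.1 x * haar r'.1 x) (fun y => haar r.2 y * haar r'.2 y),
    integral_haar_mul_haar, integral_haar_mul_haar, ite_zero_mul_ite_zero, mul_one]
  exact if_congr Prod.ext_iff.symm rfl rfl

lemma integrable_haarR_mul_haarR (r r' : RectIx) : Integrable fun z => haarR r z * haarR r' z := by
  simp_rw [haarR_mul_haarR, Measure.volume_eq_prod]
  exact (integrable_haar_mul_haar r.1 r'.1).mul_prod (integrable_haar_mul_haar r.2 r'.2)

lemma haarCoefR_tsum_mul_haarR {c : RectIx → ℝ} (hc : (Function.support c).Finite) (r : RectIx) :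
    haarCoefR (fun z => ∑' r', c r' * haarR r' z) r = c r := by
  have hsum : ∀ z, ∑' r', c r' * haarR r' z = ∑ r' ∈ hc.toFinset, c r' * haarR r' z := fun z =>
    tsum_eq_sum fun r' hr' => by
      rw [Function.notMem_support.1 (fun h => hr' (hc.mem_toFinset.2 h)), zero_mul]
  simp_rw [haarCoefR, hsum, Finset.sum_mul, mul_assoc]
  rw [integral_finsetSum _ fun r' _ => (integrable_haarR_mul_haarR r' r).const_mul _]
  simp_rw [integral_const_mul, integral_haarR_mul_haarR, mul_ite, mul_one, mul_zero]
  rw [Finset.sum_ite_eq']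
  split_ifs with h
  · rfl
  · exact (Function.notMem_support.1 (fun h' => h (hc.mem_toFinset.2 h'))).symm

lemma measurableSet_dyadicR (r : RectIx) : MeasurableSet (dyadicR r) :=
  (measurableSet_dyadicI r.1).prod (measurableSet_dyadicI r.2)

lemma volume_dyadicR (r : RectIx) : volume (dyadicR r) = ENNReal.ofReal (rlen r) := by
  rw [dyadicR, Measure.volume_eq_prod, Measure.prod_prod, volume_dyadicI, volume_dyadicI, rlen,
    ENNReal.ofReal_mul (by unfold dlen; positivity)]

lemma disjoint_dyadicR {r r' : RectIx} (h₁ : r.1.1 = r'.1.1) (h₂ : r.2.1 = r'.2.1) (hne : r ≠ r') :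
    Disjoint (dyadicR r) (dyadicR r') := by
  rw [dyadicR, dyadicR, Set.disjoint_prod]
  by_cases h : r.1 = r'.1
  · exact Or.inr (disjoint_dyadicI h₂ fun h' => hne (Prod.ext h h'))
  · exact Or.inl (disjoint_dyadicI h₁ h)

lemma sum_rlen_le_volume {Ω : Set (ℝ × ℝ)} (hΩ : volume Ω ≠ ⊤) {t : Finset RectIx}
    (hsub : ∀ r ∈ t, dyadicR r ⊆ Ω) (hdisj : (t : Set RectIx).PairwiseDisjoint dyadicR) :
    ∑ r ∈ t, rlen r ≤ (volume Ω).toReal := by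
  have hvol : ∀ r ∈ t, volume (dyadicR r) ≠ ⊤ := fun r _ => by
    rw [volume_dyadicR]; exact ENNReal.ofReal_ne_top
  calc ∑ r ∈ t, rlen r = (∑ r ∈ t, volume (dyadicR r)).toReal := by
        rw [ENNReal.toReal_sum hvol]
        exact Finset.sum_congr rfl fun r _ => by
          rw [volume_dyadicR, ENNReal.toReal_ofReal (by unfold rlen dlen; positivity)]
    _ = (volume (⋃ r ∈ t, dyadicR r)).toReal := by
        rw [measure_biUnion_finset hdisj fun r _ => measurableSet_dyadicR r]
    _ ≤ (volume Ω).toReal := ENNReal.toReal_mono hΩ (measure_mono (iUnion₂_subset hsub))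

lemma sum_rlen_le_card_shapes_mul_volume {Ω : Set (ℝ × ℝ)} (hΩ : volume Ω ≠ ⊤)
    {t : Finset RectIx} (hsub : ∀ r ∈ t, dyadicR r ⊆ Ω) :
    ∑ r ∈ t, rlen r ≤ (t.image fun r => (r.1.1, r.2.1)).card * (volume Ω).toReal := by
  rw [← Finset.sum_fiberwise_of_maps_to
    fun r hr => Finset.mem_image_of_mem (fun r : RectIx => (r.1.1, r.2.1)) hr, ← nsmul_eq_mul]
  refine Finset.sum_le_card_nsmul _ _ _ fun s _ => sum_rlen_le_volume hΩ
    (fun r hr => hsub r (Finset.mem_filter.1 hr).1) fun r hr r' hr' hne => ?_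
  have h := (Finset.mem_filter.1 hr).2.trans (Finset.mem_filter.1 hr').2.symm
  exact disjoint_dyadicR (Prod.ext_iff.1 h).1 (Prod.ext_iff.1 h).2 hne

def carlesonSum (g : ℝ × ℝ → ℝ) (Ω : Set (ℝ × ℝ)) : ℝ :=
  ∑' r : {r : RectIx // dyadicR r ⊆ Ω}, (haarCoefR g r.1) ^ 2

lemma sqrt_inv_mul_le_of_le_sq_mul {S V c : ℝ} (hc : 0 ≤ c) (hV : 0 < V) (h : S ≤ c ^ 2 * V) :
    √(V⁻¹ * S) ≤ c :=
  (Real.sqrt_le_left hc).2 (by rwa [inv_mul_le_iff₀ hV, mul_comm])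

lemma bmoProd_le {g : ℝ × ℝ → ℝ} {c : ℝ} (hc : 0 ≤ c)
    (hg : ∀ Ω, volume Ω ≠ ⊤ → carlesonSum g Ω ≤ c ^ 2 * (volume Ω).toReal) : bmoProd g ≤ c :=
  Real.iSup_le (fun Ω => sqrt_inv_mul_le_of_le_sq_mul hc
    (ENNReal.toReal_pos Ω.2.2.1.ne' Ω.2.2.2.ne) (hg Ω.1 Ω.2.2.2.ne)) hc

lemma le_bmoProd {g : ℝ × ℝ → ℝ} {c : ℝ} (hc : 0 ≤ c)
    (hg : ∀ Ω, volume Ω ≠ ⊤ → carlesonSum g Ω ≤ c ^ 2 * (volume Ω).toReal) {Ω : Set (ℝ × ℝ)}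
    (hΩ : IsOpen Ω) (h₀ : 0 < volume Ω) (hfin : volume Ω ≠ ⊤) :
    √((volume Ω).toReal⁻¹ * carlesonSum g Ω) ≤ bmoProd g :=
  le_ciSup (f := fun Ω : {Ω : Set (ℝ × ℝ) // IsOpen Ω ∧ 0 < volume Ω ∧ volume Ω < ⊤} =>
      √((volume Ω.1).toReal⁻¹ * carlesonSum g Ω.1))
    ⟨c, forall_mem_range.2 fun Ω => sqrt_inv_mul_le_of_le_sq_mul hc
      (ENNReal.toReal_pos Ω.2.2.1.ne' Ω.2.2.2.ne) (hg Ω.1 Ω.2.2.2.ne)⟩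
    ⟨Ω, hΩ, h₀, hfin.lt_top⟩

lemma volume_Ioo_prod_Ioo_toReal (a b : ℝ) (h : a ≤ b) :
    (volume (Ioo a b ×ˢ Ioo a b)).toReal = (b - a) ^ 2 := by
  rw [Measure.volume_eq_prod, Measure.prod_prod, Real.volume_Ioo, ENNReal.toReal_mul,
    ENNReal.toReal_ofReal (sub_nonneg.2 h), sq]

def unitDyadic (n : ℕ) : Finset (ℤ × ℤ) :=
  (Finset.Ioc (-(n : ℤ)) 0).biUnion fun k => (Finset.Ico 0 (2 ^ (-k).toNat)).image (Prod.mk k)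

lemma mem_unitDyadic {n : ℕ} {p : ℤ × ℤ} :
    p ∈ unitDyadic n ↔ -(n : ℤ) < p.1 ∧ p.1 ≤ 0 ∧ 0 ≤ p.2 ∧ p.2 < 2 ^ (-p.1).toNat := by
  obtain ⟨k, m⟩ := p
  simp [unitDyadic, and_assoc]

lemma sum_dlen_unitDyadic (n : ℕ) : ∑ p ∈ unitDyadic n, dlen p = n := by
  unfold dlen
  rw [Finset.sum_finset_product' (unitDyadic n) (Finset.Ioc (-(n : ℤ)) 0)
    (fun k => Finset.Ico 0 (2 ^ (-k).toNat)) fun p => by simp [mem_unitDyadic, and_assoc]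
    (f := fun k _ => (2 : ℝ) ^ k)]
  have hk : ∀ k ∈ Finset.Ioc (-(n : ℤ)) 0,
      ∑ _m ∈ Finset.Ico (0 : ℤ) (2 ^ (-k).toNat), (2 : ℝ) ^ k = 1 := fun k hk => by
    have hk0 : 0 ≤ -k := by rw [Finset.mem_Ioc] at hk; omega
    rw [Finset.sum_const, Int.card_Ico, sub_zero, nsmul_eq_mul,
      show (2 : ℤ) ^ (-k).toNat = ((2 ^ (-k).toNat : ℕ) : ℤ) by push_cast; rfl, Int.toNat_natCast,
      Nat.cast_pow, Nat.cast_ofNat, ← zpow_natCast, Int.toNat_of_nonneg hk0,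
      ← zpow_add₀ two_ne_zero, neg_add_cancel, zpow_zero]
  rw [Finset.sum_congr rfl hk, Finset.sum_const, Int.card_Ioc, nsmul_one]
  simp

lemma dyadicI_subset_Ico_of_mem_unitDyadic {n : ℕ} {p : ℤ × ℤ} (hp : p ∈ unitDyadic n) :
    dyadicI p ⊆ Ico 0 1 := by
  obtain ⟨k, m⟩ := p
  obtain ⟨-, hk, hm₀, hm⟩ := mem_unitDyadic.1 hp
  intro x hx
  have h := (mem_dyadicI_iff_of_mem hx hk 0).2 (by
    rw [zero_sub]; exact Int.ediv_eq_zero_of_lt hm₀ hm)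
  simpa [dyadicI] using h

lemma exCoef_eq_ite (n : ℕ) (r : RectIx) :
    exCoef n r = if r ∈ unitDyadic n ×ˢ unitDyadic n then Real.sqrt (rlen r) else 0 := by
  simp only [exCoef, Finset.mem_product, mem_unitDyadic, and_assoc]

lemma exCoef_sq (n : ℕ) (r : RectIx) :
    exCoef n r ^ 2 = if r ∈ unitDyadic n ×ˢ unitDyadic n then rlen r else 0 := by
  rw [exCoef_eq_ite]
  split_ifs
  · exact Real.sq_sqrt (by unfold rlen dlen; positivity)
  · exact zero_pow two_ne_zero

lemma haarCoefR_exFun (n : ℕ) (r : RectIx) : haarCoefR (exFun n) r = exCoef n r :=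
  haarCoefR_tsum_mul_haarR ((unitDyadic n ×ˢ unitDyadic n).finite_toSet.subset fun r hr =>
    Finset.mem_coe.2 (by_contra fun h => hr (by rw [exCoef_eq_ite, if_neg h]))) r

lemma carlesonSum_exFun (n : ℕ) (Ω : Set (ℝ × ℝ)) :
    carlesonSum (exFun n) Ω =
      ∑ r ∈ (unitDyadic n ×ˢ unitDyadic n).filter (fun r => dyadicR r ⊆ Ω), rlen r := by
  simp_rw [carlesonSum, haarCoefR_exFun]
  refine (tsum_subtype {r | dyadicR r ⊆ Ω} fun r => exCoef n r ^ 2).trans ?_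
  rw [Finset.sum_filter, tsum_eq_sum (s := unitDyadic n ×ˢ unitDyadic n) fun r hr => by
    rw [indicator_apply, exCoef_sq, if_neg hr, ite_self]]
  exact Finset.sum_congr rfl fun r hr => by rw [indicator_apply, exCoef_sq, if_pos hr]; rfl

lemma carlesonSum_exFun_le (n : ℕ) {Ω : Set (ℝ × ℝ)} (hΩ : volume Ω ≠ ⊤) :
    carlesonSum (exFun n) Ω ≤ n ^ 2 * (volume Ω).toReal := by
  rw [carlesonSum_exFun]
  refine (sum_rlen_le_card_shapes_mul_volume hΩ fun r hr => (Finset.mem_filter.1 hr).2).trans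
    (mul_le_mul_of_nonneg_right ?_ ENNReal.toReal_nonneg)
  have hshapes : ((unitDyadic n ×ˢ unitDyadic n).filter (fun r => dyadicR r ⊆ Ω)).image
      (fun r => (r.1.1, r.2.1)) ⊆ Finset.Ioc (-(n : ℤ)) 0 ×ˢ Finset.Ioc (-(n : ℤ)) 0 := by
    intro s hs
    obtain ⟨r, hr, rfl⟩ := Finset.mem_image.1 hs
    obtain ⟨h₁, h₂⟩ := Finset.mem_product.1 (Finset.mem_filter.1 hr).1
    simp only [Finset.mem_product, Finset.mem_Ioc]
    exact ⟨⟨(mem_unitDyadic.1 h₁).1, (mem_unitDyadic.1 h₁).2.1⟩,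
      ⟨(mem_unitDyadic.1 h₂).1, (mem_unitDyadic.1 h₂).2.1⟩⟩
  have hcard := Finset.card_le_card hshapes
  rw [Finset.card_product, Int.card_Ioc, sub_neg_eq_add, zero_add, Int.toNat_natCast] at hcard
  rw [sq]
  exact_mod_cast hcard

lemma carlesonSum_exFun_of_subset (n : ℕ) {Ω : Set (ℝ × ℝ)} (hΩ : Ico 0 1 ×ˢ Ico 0 1 ⊆ Ω) :
    carlesonSum (exFun n) Ω = n ^ 2 := by
  rw [carlesonSum_exFun, Finset.filter_true_of_mem fun r hr => ?_, Finset.sum_product]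
  · simp_rw [rlen, ← Finset.mul_sum, ← Finset.sum_mul, sum_dlen_unitDyadic, sq]
  obtain ⟨h₁, h₂⟩ := Finset.mem_product.1 hr
  exact (Set.prod_mono (dyadicI_subset_Ico_of_mem_unitDyadic h₁)
    (dyadicI_subset_Ico_of_mem_unitDyadic h₂)).trans hΩ

/-- The rectangles of `[0,1)²` touching its lower or left edge are not contained in `(0,1)²`,
hence the open squares `(-δ,1)²`. -/
lemma le_bmoProd_exFun (n : ℕ) : (n : ℝ) ≤ bmoProd (exFun n) := by
  have hval : ∀ δ : ℝ, 0 < δ → n / (1 + δ) ≤ bmoProd (exFun n) := fun δ hδ => by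
    have hvol := volume_Ioo_prod_Ioo_toReal (-δ) 1 (by linarith)
    have hpos : 0 < (volume (Ioo (-δ) 1 ×ˢ Ioo (-δ) 1)).toReal := by rw [hvol]; nlinarith
    have hle := le_bmoProd n.cast_nonneg (fun Ω hΩ => carlesonSum_exFun_le n hΩ)
      (isOpen_Ioo.prod isOpen_Ioo) (ENNReal.toReal_pos_iff.1 hpos).1
      (ENNReal.toReal_pos_iff.1 hpos).2.ne
    rwa [carlesonSum_exFun_of_subset n (Set.prod_mono (Ico_subset_Ioo_left (by linarith))
      (Ico_subset_Ioo_left (by linarith))), hvol, sub_neg_eq_add, ← inv_pow,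
      ← mul_pow, Real.sqrt_sq (by positivity), inv_mul_eq_div] at hle
  have hlim : Filter.Tendsto (fun δ : ℝ => n / (1 + δ)) (𝓝[>] 0) (𝓝 n) := by
    have hcont : ContinuousAt (fun δ : ℝ => n / (1 + δ)) 0 :=
      continuousAt_const.div (continuousAt_const.add continuousAt_id) (by norm_num)
    simpa using hcont.tendsto.mono_left nhdsWithin_le_nhds
  exact le_of_tendsto hlim (eventually_nhdsWithin_of_forall hval)

theorem example_bmo_norm_general (n : ℕ) :
    bmoProd (exFun n) = n ∧
    Real.sqrt ((volume ((Set.Ico (0:ℝ) 1) ×ˢ (Set.Ico (0:ℝ) 1))).toReal⁻¹ *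
        ∑' r : {r : RectIx // dyadicR r ⊆ (Set.Ico (0:ℝ) 1) ×ˢ (Set.Ico (0:ℝ) 1)},
          (haarCoefR (exFun n) r.1) ^ 2) = n := by
  refine ⟨le_antisymm (bmoProd_le n.cast_nonneg fun Ω hΩ => carlesonSum_exFun_le n hΩ)
    (le_bmoProd_exFun n), ?_⟩
  have hunit := carlesonSum_exFun_of_subset n Subset.rfl
  rw [carlesonSum] at hunit
  rw [hunit, Measure.volume_eq_prod, Measure.prod_prod, Real.volume_Ico]
  simp

/-- For `n` a power of `2`, the example function `g'` has dyadic product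
BMO norm exactly `n`; in particular for the unit square `Ω`,
`(|Ω|⁻¹ Σ_{R⊆Ω} (g'_R)²)^{1/2} = n`. -/
theorem example_bmo_norm (n : ℕ) (hn : ∃ m : ℕ, n = 2 ^ m) :
    bmoProd (exFun n) = n ∧
    Real.sqrt ((volume ((Set.Ico (0:ℝ) 1) ×ˢ (Set.Ico (0:ℝ) 1))).toReal⁻¹ *
        ∑' r : {r : RectIx // dyadicR r ⊆ (Set.Ico (0:ℝ) 1) ×ˢ (Set.Ico (0:ℝ) 1)},
          (haarCoefR (exFun n) r.1) ^ 2) = n :=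
  example_bmo_norm_general n

end
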